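/- Let φ be continuously differentiable and strictly convex on S, and let w be an S-valued random variable with finite mean μ* and with E[φ(w)] finite. Then for any b ∈ S, E[d_φ(w, b)] = d_φ(μ*, b) + (E[φ(w)] - φ(μ*)). Consequently, b ↦ E[d_φ(w, b)] is minimized over S at b = μ*. -/
import Mathlib


open MeasureTheory

lemma bregman_tangent_le {S : Set ℝ} {φ : ℝ → ℝ} {b y d : ℝ}
    (hconv : StrictConvexOn ℝ S φ) (hb : b ∈ S) (hy : y ∈ S)
    (hd : HasDerivAt φ d b) : φ b + d * (y - b) ≤ φ y := by
  rcases lt_trichotomy b y with h | h | h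
  · have := hconv.lt_slope_of_hasDerivAt hb hy h hd
    rw [slope_def_field, lt_div_iff₀ (by linarith)] at this
    nlinarith
  · simp [h]
  · have := hconv.slope_lt_of_hasDerivAt hy hb h hd
    rw [slope_def_field, div_lt_iff₀ (by linarith)] at this
    nlinarith

/-- Expected Bregman loss decomposition: `E[d_φ(w, b)] = d_φ(μ*, b) + (E[φ(w)] - φ(μ*))`
with `μ* = E[w]`; consequently `b ↦ E[d_φ(w,b)]` is minimized over `S` at `b = μ*`. -/
theorem expected_bregman_decomposition {Ω : Type*} [MeasureSpace Ω]
    [IsProbabilityMeasure (volume : Measure Ω)]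
    (S : Set ℝ) (hS : S.OrdConnected) (φ φ' : ℝ → ℝ)
    (hdiff : ∀ x ∈ S, HasDerivAt φ (φ' x) x)
    (hcont : ContinuousOn φ' S)
    (hconv : StrictConvexOn ℝ S φ)
    (w : Ω → ℝ) (hw : ∀ ω, w ω ∈ S)
    (hint : Integrable w) (hintφ : Integrable fun ω => φ (w ω))
    (hμ : (∫ ω, w ω) ∈ S) :
    ∀ b ∈ S,
      ((∫ ω, (φ (w ω) - φ b - φ' b * (w ω - b)))
          = (φ (∫ ω, w ω) - φ b - φ' b * ((∫ ω, w ω) - b))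
            + ((∫ ω, φ (w ω)) - φ (∫ ω, w ω)))
      ∧ (∫ ω, (φ (w ω) - φ (∫ ω', w ω') - φ' (∫ ω', w ω') * (w ω - (∫ ω', w ω'))))
          ≤ ∫ ω, (φ (w ω) - φ b - φ' b * (w ω - b)) := by
  have key : ∀ b : ℝ, (∫ ω, (φ (w ω) - φ b - φ' b * (w ω - b)))
      = (∫ ω, φ (w ω)) - φ b - φ' b * ((∫ ω, w ω) - b) := by
    intro b
    have h1 : Integrable (fun ω => φ' b * (w ω - b)) := by
      exact ((hint.sub (integrable_const b)).const_mul _)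
    have h2 : Integrable (fun ω => φ (w ω) - φ b) := by
      exact hintφ.sub (integrable_const _)
    have h3 : Integrable (fun ω => w ω - b) := by
      exact hint.sub (integrable_const _)
    rw [integral_sub h2 h1, integral_sub hintφ (integrable_const _), integral_const_mul,
      integral_sub hint (integrable_const _), integral_const, integral_const]
    simp [measure_univ]
  intro b hb
  constructor
  · rw [key b]; ring
  · rw [key b, key (∫ ω, w ω)]
    have h0 := bregman_tangent_le hconv hb hμ (hdiff b hb)
    nlinarith
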